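/- Let Δ be a compact geometry over a finite type set I with at least 2 elements, i.e. the vertex set V carries a compact Hausdorff topology and each flag variety V_J ⊆ V^J is closed. Define p: Cham(Δ) × |2^I| → |Δ| by p(γ, Σ_i i·ξ(i)) = Σ_i γ(i)·ξ(i), and give |Δ| the quotient topology |Δ|_K. Then |Δ|_K is a compact Hausdorff space, and it is path-connected. -/

import Mathlib

/-! Basic combinatorial infrastructure: abstract simplicial complexes, chamber
complexes, galleries, typed complexes and geometries of type `M` in the sense of Tits. -/

/-- An abstract simplicial complex on the vertex set `V`, given by its set of
(finite) faces, closed under passing to subsets. -/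
structure SComplex (V : Type*) [DecidableEq V] where
  faces : Set (Finset V)
  down_closed : ∀ ⦃s t : Finset V⦄, s ∈ faces → t ⊆ s → t ∈ faces

namespace SComplex

variable {V : Type*} [DecidableEq V] (K : SComplex V)

/-- A chamber is a maximal face. -/
def IsChamber (c : Finset V) : Prop :=
  c ∈ K.faces ∧ ∀ s ∈ K.faces, c ⊆ s → s = c

/-- A complex is pure of rank `n` if every face is contained in a chamber and every
chamber has `n` vertices. -/
def Pure (n : ℕ) : Prop :=
  (∀ s ∈ K.faces, ∃ c, K.IsChamber c ∧ s ⊆ c) ∧ ∀ c, K.IsChamber c → c.card = n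

/-- Two chambers are adjacent (in a complex of rank `n`) if they share a face of
corank at most 1. -/
def Adj (n : ℕ) (c d : Finset V) : Prop :=
  K.IsChamber c ∧ K.IsChamber d ∧ n ≤ (c ∩ d).card + 1

/-- A pure rank-`n` complex is gallery-connected if any two chambers are joined by a
gallery, i.e. by a chain of consecutively adjacent chambers. -/
def GalleryConnected (n : ℕ) : Prop :=
  ∀ c d, K.IsChamber c → K.IsChamber d → Relation.ReflTransGen (K.Adj n) c d

/-- A chamber complex of rank `n`: pure of rank `n` and gallery-connected. -/
def IsChamberComplex (n : ℕ) : Prop :=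
  K.Pure n ∧ K.GalleryConnected n

/-- Thickness: every corank-1 face lies in at least three chambers. -/
def Thick (n : ℕ) : Prop :=
  ∀ s ∈ K.faces, s.card + 1 = n →
    ∃ c₁ c₂ c₃ : Finset V, K.IsChamber c₁ ∧ K.IsChamber c₂ ∧ K.IsChamber c₃ ∧
      s ⊆ c₁ ∧ s ⊆ c₂ ∧ s ⊆ c₃ ∧ c₁ ≠ c₂ ∧ c₁ ≠ c₃ ∧ c₂ ≠ c₃

/-- The link of a simplex `α`. -/
def link (α : Finset V) : SComplex V where
  faces := {s | Disjoint α s ∧ α ∪ s ∈ K.faces}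
  down_closed := by
    intro s t hs hts
    exact ⟨hs.1.mono_right (Finset.coe_subset.2 hts |>.trans le_rfl),
      K.down_closed hs.2 (Finset.union_subset_union le_rfl hts)⟩

/-- The graph on the vertices of a complex, two vertices being adjacent when they are
joined by an edge of the complex. -/
def vertexGraph : SimpleGraph {v : V // {v} ∈ K.faces} where
  Adj u w := u ≠ w ∧ {u.1, w.1} ∈ K.faces
  symm := ⟨by
    intro u w h
    exact ⟨h.1.symm, by rw [Finset.pair_comm]; exact h.2⟩⟩
  loopless := ⟨fun u h => h.1 rfl⟩

/-- A generalized `n`-gon: a thick chamber complex of rank 2 whose vertex graph has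
girth `2n` and diameter `n`. -/
def IsGenNGon (n : ℕ) : Prop :=
  K.IsChamberComplex 2 ∧ K.Thick 2 ∧
    K.vertexGraph.egirth = (2 * n : ℕ) ∧ K.vertexGraph.ediam = (n : ℕ)

end SComplex

/-- A complex with a type function, injective on every face, with values in the finite
set `I` of types. -/
structure TypedComplex (V I : Type*) [DecidableEq V] where
  cplx : SComplex V
  typ : V → I
  typ_injOn : ∀ s ∈ cplx.faces, Set.InjOn typ ↑s

namespace TypedComplex

variable {V I : Type*} [DecidableEq V] [DecidableEq I] [Fintype I]

/-- A geometry over `I`: a thick, residually connected flag complex, pure of rank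
`card I`, with a type function. -/
def IsGeometry (Δ : TypedComplex V I) : Prop :=
  (∅ : Finset V) ∈ Δ.cplx.faces ∧
  Δ.cplx.Pure (Fintype.card I) ∧
  Δ.cplx.Thick (Fintype.card I) ∧
  (∀ s : Finset V, (∀ v ∈ s, {v} ∈ Δ.cplx.faces) →
    (∀ u ∈ s, ∀ v ∈ s, u ≠ v → ({u, v} : Finset V) ∈ Δ.cplx.faces) →
    s ∈ Δ.cplx.faces) ∧
  ∀ s ∈ Δ.cplx.faces, s.card < Fintype.card I →
    (Δ.cplx.link s).IsChamberComplex (Fintype.card I - s.card)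

/-- A geometry of type `M`, for a Coxeter matrix `M` over `I`: the link of every
corank-2 face of cotype `{i, j}` is a generalized `M i j`-gon. -/
def IsGeomOfType (Δ : TypedComplex V I) (M : CoxeterMatrix I) : Prop :=
  Δ.IsGeometry ∧
  ∀ s ∈ Δ.cplx.faces, ∀ i j : I, i ≠ j →
    s.image Δ.typ = (Finset.univ.erase i).erase j →
    (Δ.cplx.link s).IsGenNGon (M i j)

/-- Nonstammering galleries from `c` to `e` together with their type: the list of
cotypes of the consecutive intersections. -/
inductive GalleryOfType (Δ : TypedComplex V I) :
    Finset V → Finset V → List I → Prop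
  | nil {c : Finset V} (hc : Δ.cplx.IsChamber c) : GalleryOfType Δ c c []
  | cons {c d e : Finset V} {i : I} {ω : List I}
      (hc : Δ.cplx.IsChamber c) (hd : Δ.cplx.IsChamber d) (hne : c ≠ d)
      (hcot : (c ∩ d).image Δ.typ = Finset.univ.erase i)
      (hrest : GalleryOfType Δ d e ω) : GalleryOfType Δ c e (i :: ω)

end TypedComplex

/-- The restriction of a Coxeter matrix to a subset of the index set. -/
def CoxeterMatrix.restrict {B : Type*} (M : CoxeterMatrix B) (J : Set B) :
    CoxeterMatrix J where
  M := fun i j => M i.1 j.1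
  isSymm := by
    ext i j
    exact M.symmetric j.1 i.1
  diagonal i := M.diagonal i.1
  off_diagonal i j h := M.off_diagonal i.1 j.1 fun hc => h (Subtype.ext hc)

namespace TypedComplex

variable {V I : Type*} [DecidableEq V] [DecidableEq I] [Fintype I] [TopologicalSpace V]

/-- The flag variety of type `J`: simplices of type `J`, regarded (via the vertex of
each type) as functions `J → V`. -/
def flagVar (Δ : TypedComplex V I) (J : Finset I) : Set ((↥J) → V) :=
  {x | (Finset.univ.image fun j => x j) ∈ Δ.cplx.faces ∧ ∀ j : ↥J, Δ.typ (x j) = j.1}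

/-- The space of chambers, regarded as functions `I → V` picking the vertex of each
type. -/
def chamberSet (Δ : TypedComplex V I) : Set (I → V) :=
  {x | (Finset.univ.image x) ∈ Δ.cplx.faces ∧ ∀ i, Δ.typ (x i) = i}

/-- The map `p : Cham(Δ) × |2^I| → (V → ℝ)` realizing a chamber together with
barycentric coordinates as a point of the geometric realization. -/
def pFun (Δ : TypedComplex V I) :
    (↥Δ.chamberSet × ↥(stdSimplex ℝ I)) → (V → ℝ) := fun p v =>
  ∑ i : I, if p.1.1 i = v then p.2.1 i else 0

/-- Two pairs (chamber, coordinates) are identified iff they realize the same point. -/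
def coarseSetoid (Δ : TypedComplex V I) :
    Setoid (↥Δ.chamberSet × ↥(stdSimplex ℝ I)) where
  r a b := Δ.pFun a = Δ.pFun b
  iseqv := ⟨fun _ => rfl, Eq.symm, Eq.trans⟩

/-- The geometric realization `|Δ|_K` with the coarse (quotient) topology. -/
def CoarseSpace (Δ : TypedComplex V I) : Type _ := Quotient Δ.coarseSetoid

instance (Δ : TypedComplex V I) : TopologicalSpace Δ.CoarseSpace :=
  instTopologicalSpaceQuotient

end TypedComplex

/-! The realization `|Δ|_K` is the quotient of the compact Hausdorff space
`Cham(Δ) × |2^I|` by the relation `p(γ, ξ) = p(γ', ξ')`, which holds iff `ξ = ξ'` and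
`γ i = γ' i` wherever `ξ i ≠ 0`. This relation is closed, and the quotient of a compact
Hausdorff space by a closed equivalence relation is compact Hausdorff.

For path-connectedness, each chamber contributes a copy of the convex simplex `|2^I|`.
Two chambers that differ only in the vertex of type `i₀` share the vertex of any other
type `i₁ ≠ i₀`, so their copies meet; and residual connectedness at the empty simplex
says that any two chambers are joined by a gallery. -/

section QuotientByClosedRelation

variable {X : Type*} [TopologicalSpace X] [CompactSpace X] [T2Space X] {s : Setoid X}

theorem Setoid.isClosedMap_quotient_mk (hs : IsClosed {p : X × X | s p.1 p.2}) :
    IsClosedMap (Quotient.mk s) := by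
  intro C hC
  rw [← isQuotientMap_quotient_mk'.isClosed_preimage]
  change IsClosed (Quotient.mk s ⁻¹' _)
  have hsaturation : Quotient.mk s ⁻¹' (Quotient.mk s '' C) =
      Prod.fst '' ({p : X × X | s p.1 p.2} ∩ Set.univ ×ˢ C) := by
    ext a
    simp only [Set.mem_preimage, Set.mem_image, Quotient.eq, Set.mem_inter_iff,
      Set.mem_ofPred_eq, Set.mem_prod, Set.mem_univ, true_and, Prod.exists,
      exists_and_right, exists_eq_right]
    exact exists_congr fun b => ⟨fun h => ⟨s.symm h.2, h.1⟩, fun h => ⟨h.2, s.symm h.1⟩⟩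
  rw [hsaturation]
  exact ((hs.inter (isClosed_univ.prod hC)).isCompact.image continuous_fst).isClosed

theorem Setoid.t2Space_quotient (hs : IsClosed {p : X × X | s p.1 p.2}) :
    T2Space (Quotient s) := by
  have hfiber (a : X) : IsClosed {x | s x a} :=
    hs.preimage (continuous_id.prodMk continuous_const)
  refine ⟨Quotient.ind₂ fun a b hab => ?_⟩
  have hdisj : Disjoint {x | s x a} {x | s x b} :=
    Set.disjoint_left.2 fun x hxa hxb => hab (Quotient.sound (s.trans (s.symm hxa) hxb))
  obtain ⟨U, W, hU, hW, haU, hbW, hUW⟩ := normal_separation (hfiber a) (hfiber b) hdisj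
  -- complements of images of closed sets under a closed map: saturated open neighbourhoods
  have hclosed := Setoid.isClosedMap_quotient_mk hs
  refine ⟨(Quotient.mk s '' Uᶜ)ᶜ, (Quotient.mk s '' Wᶜ)ᶜ,
    (hclosed _ hU.isClosed_compl).isOpen_compl, (hclosed _ hW.isClosed_compl).isOpen_compl,
    fun ⟨x, hx, hxa⟩ => hx (haU (Quotient.exact hxa)),
    fun ⟨x, hx, hxb⟩ => hx (hbW (Quotient.exact hxb)), ?_⟩
  refine Set.disjoint_left.2 (Quotient.ind fun x hxU hxW => ?_)
  exact Set.disjoint_left.1 hUW (not_not.1 fun h => hxU ⟨x, h, rfl⟩)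
    (not_not.1 fun h => hxW ⟨x, h, rfl⟩)

end QuotientByClosedRelation

theorem SComplex.link_empty {V : Type*} [DecidableEq V] (K : SComplex V) : K.link ∅ = K := by
  cases K
  simp [SComplex.link]

namespace TypedComplex

def AgreeExceptAtOne {I V : Type*} (x y : I → V) : Prop :=
  ∃ i₀, ∀ i ≠ i₀, x i = y i

variable {V I : Type*} [DecidableEq V] [Fintype I] {Δ : TypedComplex V I}
  {x y : I → V}

theorem injective_of_mem_chamberSet (hx : x ∈ Δ.chamberSet) : Function.Injective x :=
  fun i j h => by simpa only [hx.2] using congrArg Δ.typ h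

theorem apply_typ_of_mem_chamberSet (hx : x ∈ Δ.chamberSet) {v : V}
    (hv : v ∈ Finset.univ.image x) : x (Δ.typ v) = v := by
  obtain ⟨i, -, rfl⟩ := Finset.mem_image.1 hv
  rw [hx.2]

theorem eq_of_image_eq (hx : x ∈ Δ.chamberSet) (hy : y ∈ Δ.chamberSet)
    (h : Finset.univ.image x = Finset.univ.image y) : x = y := by
  funext i
  have hxi : x i ∈ Finset.univ.image y := h ▸ Finset.mem_image_of_mem x (Finset.mem_univ i)
  rw [← apply_typ_of_mem_chamberSet hy hxi, hx.2]

theorem isChamber_image (hpure : Δ.cplx.Pure (Fintype.card I)) (hx : x ∈ Δ.chamberSet) :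
    Δ.cplx.IsChamber (Finset.univ.image x) := by
  obtain ⟨c, hc, hxc⟩ := hpure.1 _ hx.1
  have hcard : c.card ≤ (Finset.univ.image x).card := by
    rw [hpure.2 c hc, Finset.card_image_of_injective _ (injective_of_mem_chamberSet hx),
      Finset.card_univ]
  rwa [Finset.eq_of_subset_of_card_le hxc hcard]

theorem exists_mem_chamberSet_image_eq (hpure : Δ.cplx.Pure (Fintype.card I))
    {D : Finset V} (hD : Δ.cplx.IsChamber D) :
    ∃ x ∈ Δ.chamberSet, Finset.univ.image x = D := by
  classical
  have htyp : D.image Δ.typ = Finset.univ := Finset.eq_univ_of_card _ (by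
    rw [Finset.card_image_of_injOn (Δ.typ_injOn D hD.1), hpure.2 D hD])
  choose x hxD hxtyp using fun i => Finset.mem_image.1 (htyp ▸ Finset.mem_univ i)
  have hsub : Finset.univ.image x ⊆ D := by
    intro v hv
    obtain ⟨i, -, rfl⟩ := Finset.mem_image.1 hv
    exact hxD i
  have hx : x ∈ Δ.chamberSet := ⟨Δ.cplx.down_closed hD.1 hsub, hxtyp⟩
  refine ⟨x, hx, Finset.eq_of_subset_of_card_le hsub ?_⟩
  rw [hpure.2 D hD, Finset.card_image_of_injective _ (injective_of_mem_chamberSet hx),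
    Finset.card_univ]

theorem agreeExceptAtOne_of_adj [Nonempty I] (hx : x ∈ Δ.chamberSet) (hy : y ∈ Δ.chamberSet)
    (hadj : Δ.cplx.Adj (Fintype.card I) (Finset.univ.image x) (Finset.univ.image y)) :
    AgreeExceptAtOne x y := by
  set T := Finset.univ.filter fun i => x i = y i
  -- a common vertex `v` of both chambers is `x (typ v) = y (typ v)`
  have hcommon : Finset.univ.image x ∩ Finset.univ.image y ⊆ T.image x := by
    intro v hv
    rw [Finset.mem_inter] at hv
    refine Finset.mem_image.2 ⟨Δ.typ v, Finset.mem_filter.2 ⟨Finset.mem_univ _, ?_⟩, ?_⟩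
    · rw [apply_typ_of_mem_chamberSet hx hv.1, apply_typ_of_mem_chamberSet hy hv.2]
    · exact apply_typ_of_mem_chamberSet hx hv.1
  have hcard : (Finset.univ.filter fun i => ¬x i = y i).card ≤ 1 := by
    have hcommon_card := (Finset.card_le_card hcommon).trans Finset.card_image_le
    have hsplit : T.card + (Finset.univ.filter fun i => ¬x i = y i).card = Fintype.card I :=
      Finset.card_filter_add_card_filter_not _
    have hadj_card := hadj.2.2
    omega
  obtain ⟨i₀, hi₀⟩ := Finset.card_le_one_iff_subset_singleton.1 hcard
  exact ⟨i₀, fun i hi => not_not.1 fun hne =>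
    hi (Finset.mem_singleton.1 (hi₀ (Finset.mem_filter.2 ⟨Finset.mem_univ i, hne⟩)))⟩

theorem galleryConnected_of_isGeometry [Nonempty I] (hΔ : Δ.IsGeometry) :
    Δ.cplx.GalleryConnected (Fintype.card I) := by
  have h := (hΔ.2.2.2.2 ∅ hΔ.1 (by simpa using Fintype.card_pos)).2
  rwa [SComplex.link_empty, Finset.card_empty, Nat.sub_zero] at h

theorem reflTransGen_agreeExceptAtOne [Nonempty I] (hΔ : Δ.IsGeometry)
    (c d : Δ.chamberSet) :
    Relation.ReflTransGen (fun c d : Δ.chamberSet => AgreeExceptAtOne c.1 d.1) c d := by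
  have hpure := hΔ.2.1
  have hgallery := galleryConnected_of_isGeometry hΔ _ _ (isChamber_image hpure c.2)
    (isChamber_image hpure d.2)
  generalize hD : Finset.univ.image d.1 = D at hgallery
  induction hgallery generalizing d with
  | refl => rw [Subtype.ext (eq_of_image_eq c.2 d.2 hD.symm)]
  | tail _ hadj ih =>
    obtain ⟨z, hz, hzD⟩ := exists_mem_chamberSet_image_eq hpure hadj.1
    exact (ih ⟨z, hz⟩ hzD).tail (agreeExceptAtOne_of_adj hz d.2 (hD ▸ hzD ▸ hadj))

theorem pFun_apply (c d : Δ.chamberSet) (η : stdSimplex ℝ I) (i : I) :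
    Δ.pFun (d, η) (c.1 i) = if d.1 i = c.1 i then η.1 i else 0 := by
  refine Finset.sum_eq_single_of_mem i (Finset.mem_univ i) fun j _ hji => if_neg fun h => hji ?_
  simpa only [d.2.2, c.2.2] using congrArg Δ.typ h

theorem pFun_eq_pFun_iff (a b : Δ.chamberSet × stdSimplex ℝ I) :
    Δ.pFun a = Δ.pFun b ↔ a.2 = b.2 ∧ ∀ i, a.1.1 i = b.1.1 i ∨ a.2.1 i = 0 := by
  obtain ⟨c, ξ⟩ := a
  obtain ⟨d, η⟩ := b
  constructor
  · intro h
    have hξ (i : I) : ξ.1 i = if d.1 i = c.1 i then η.1 i else 0 := by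
      rw [← pFun_apply, ← h, pFun_apply, if_pos rfl]
    have hη (i : I) : η.1 i = if c.1 i = d.1 i then ξ.1 i else 0 := by
      rw [← pFun_apply, h, pFun_apply, if_pos rfl]
    refine ⟨Subtype.ext (funext fun i => ?_), fun i => ?_⟩
    · by_cases hcd : c.1 i = d.1 i
      · rw [hξ, if_pos hcd.symm]
      · rw [hξ, if_neg (Ne.symm hcd), hη, if_neg hcd]
    · by_cases hcd : c.1 i = d.1 i
      · exact .inl hcd
      · rw [hξ, if_neg (Ne.symm hcd)]
        exact .inr rfl
  · rintro ⟨rfl, hzero⟩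
    dsimp only at hzero
    funext v
    refine Finset.sum_congr rfl fun i _ => ?_
    rcases hzero i with hcd | hξ
    · rw [hcd]
    · simp only [hξ, ite_self]

variable [TopologicalSpace V]

theorem isClosed_setOf_pFun_eq [T2Space V] :
    IsClosed {p : (Δ.chamberSet × stdSimplex ℝ I) × (Δ.chamberSet × stdSimplex ℝ I) |
      Δ.pFun p.1 = Δ.pFun p.2} := by
  simp only [pFun_eq_pFun_iff, Set.ofPred_and, Set.ofPred_forall, Set.ofPred_or]
  refine (isClosed_eq (by fun_prop) (by fun_prop)).inter (isClosed_iInter fun i => .union ?_ ?_)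
  · exact isClosed_eq ((continuous_apply i).comp (by fun_prop))
      ((continuous_apply i).comp (by fun_prop))
  · exact isClosed_eq ((continuous_apply i).comp (by fun_prop)) continuous_const

theorem compactSpace_coarseSpace [CompactSpace V] (hch : IsClosed Δ.chamberSet) :
    CompactSpace Δ.CoarseSpace :=
  have : CompactSpace Δ.chamberSet := isCompact_iff_compactSpace.mp hch.isCompact
  Quotient.compactSpace

theorem t2Space_coarseSpace [CompactSpace V] [T2Space V]
    (hch : IsClosed Δ.chamberSet) : T2Space Δ.CoarseSpace :=
  have : CompactSpace Δ.chamberSet := isCompact_iff_compactSpace.mp hch.isCompact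
  Setoid.t2Space_quotient isClosed_setOf_pFun_eq

theorem joined_mk_mk [Nonempty I] (c : Δ.chamberSet) (ξ η : stdSimplex ℝ I) :
    Joined (Quotient.mk Δ.coarseSetoid (c, ξ)) (Quotient.mk Δ.coarseSetoid (c, η)) :=
  (PathConnectedSpace.joined ξ η).map (continuous_quotient_mk'.comp (by fun_prop))

theorem joined_mk_mk_of_agreeExceptAtOne [Nontrivial I] {c d : Δ.chamberSet}
    (hcd : AgreeExceptAtOne c.1 d.1) (ξ η : stdSimplex ℝ I) :
    Joined (Quotient.mk Δ.coarseSetoid (c, ξ)) (Quotient.mk Δ.coarseSetoid (d, η)) := by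
  classical
  obtain ⟨i₀, hi₀⟩ := hcd
  obtain ⟨i₁, hi₁⟩ := exists_ne i₀
  -- the vertex of type `i₁` is common to both chambers
  let ζ : stdSimplex ℝ I := ⟨_, ite_eq_mem_stdSimplex ℝ i₁⟩
  have hshared : Quotient.mk Δ.coarseSetoid (c, ζ) = Quotient.mk Δ.coarseSetoid (d, ζ) := by
    refine Quotient.sound ((pFun_eq_pFun_iff _ _).2 ⟨rfl, fun i => ?_⟩)
    by_cases hi : i = i₀
    · exact .inr (if_neg (hi ▸ hi₁))
    · exact .inl (hi₀ i hi)
  exact (joined_mk_mk c ξ ζ).trans (hshared ▸ joined_mk_mk d ζ η)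

theorem pathConnectedSpace_coarseSpace [Nontrivial I] (hΔ : Δ.IsGeometry) :
    PathConnectedSpace Δ.CoarseSpace := by
  obtain ⟨D, hD, -⟩ := hΔ.2.1.1 ∅ hΔ.1
  obtain ⟨c, hc, -⟩ := exists_mem_chamberSet_image_eq hΔ.2.1 hD
  refine ⟨⟨Quotient.mk Δ.coarseSetoid (⟨c, hc⟩, Classical.arbitrary _)⟩,
    Quotient.ind₂ fun ⟨c, ξ⟩ ⟨d, η⟩ => ?_⟩
  induction reflTransGen_agreeExceptAtOne hΔ c d generalizing η with
  | refl => exact joined_mk_mk c ξ η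
  | tail _ hstep ih => exact (ih ξ).trans (joined_mk_mk_of_agreeExceptAtOne hstep ξ η)

end TypedComplex

theorem statement6_general {V I : Type*} [DecidableEq V] [Fintype I]
    [TopologicalSpace V] [CompactSpace V] [T2Space V]
    (Δ : TypedComplex V I) (hΔ : Δ.IsGeometry) (hI : 2 ≤ Fintype.card I)
    (hch : IsClosed Δ.chamberSet) :
    CompactSpace Δ.CoarseSpace ∧ T2Space Δ.CoarseSpace ∧
      PathConnectedSpace Δ.CoarseSpace :=
  have : Nontrivial I := Fintype.one_lt_card_iff_nontrivial.mp hI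
  ⟨TypedComplex.compactSpace_coarseSpace hch, TypedComplex.t2Space_coarseSpace hch,
    TypedComplex.pathConnectedSpace_coarseSpace hΔ⟩

/-- Let `Δ` be a compact geometry over a finite type set `I` with at
least two elements: the vertex set carries a compact Hausdorff topology and every flag
variety is closed.  Then the realization `|Δ|_K` (quotient of `Cham(Δ) × |2^I|`) is a
compact Hausdorff space, and it is path-connected. -/
theorem statement6 {V I : Type*} [DecidableEq V] [DecidableEq I] [Fintype I]
    [TopologicalSpace V] [CompactSpace V] [T2Space V]
    (Δ : TypedComplex V I) (hΔ : Δ.IsGeometry) (hI : 2 ≤ Fintype.card I)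
    (hflag : ∀ J : Finset I, IsClosed (Δ.flagVar J))
    (hch : IsClosed Δ.chamberSet) :
    CompactSpace Δ.CoarseSpace ∧ T2Space Δ.CoarseSpace ∧
      PathConnectedSpace Δ.CoarseSpace :=
  statement6_general Δ hΔ hI hch
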